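/- arXiv:1404.1352 — 2 statements merged into one kernel-verified Lean document; each statement's English description precedes it below -/
import Mathlib

section
/- Let K be a field and n ≥ 2. In the algebra A below, the elements e_m (m ∈ ℤ/n) are mutually orthogonal idempotents with Σ_m e_m = 1; they satisfy e_{m+1}·x_m·e_m = x_m for all m, and x_l·x_m = 0 for all l, m. Moreover, for every k ∈ ℤ/n, the single n-tuple (a_1, …, a_n) := (x_{k+1}, x_{k+2}, …, x_{k+n}) satisfies the cyclic relations (with i+1 = n and a one-element index family); equivalently, the element x_k ⊗ x_{k−1} ⊗ ⋯ ⊗ x_{k−n+1} ∈ A^{⊗n} gives rise to an A-bimodule map (A^∨)^{⊗_A (n−1)} → A. -/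
/-!
Multiplying a generator by `a = (d, y)` only rescales it: `x_m · a = d(m) • x_m` and
`a · x_m = d(m+1) • x_m`. So both sides of a cyclic relation for `(x_{k+1}, …, x_{k+n})` are the
same pure tensor times `d(j+1)`, where `x_{j+1}` and `x_j` are the two neighbouring slots
involved; for the wrap-around, `x_{k+1}` and `x_{k+n}` are neighbours because `n = 0` in `ℤ/n`.
-/

open scoped TensorProduct
open PiTensorProduct

/-- The bimodule `M = (ℤ/n → K)` over `R = (ℤ/n → K)`, with left action
`(d • x)(m) = d(m+1)·x(m)` and right action `(x • d)(m) = x(m)·d(m)`. -/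
def CycM (n : ℕ) (K : Type*) : Type _ := ZMod n → K

section Instances

variable (n : ℕ) (K : Type*) [Field K]

instance : AddCommGroup (CycM n K) := inferInstanceAs (AddCommGroup (ZMod n → K))

instance : Module K (CycM n K) := inferInstanceAs (Module K (ZMod n → K))

instance : SMul (ZMod n → K) (CycM n K) :=
  ⟨fun d x => fun m => d (m + 1) * x m⟩

instance : SMul (ZMod n → K)ᵐᵒᵖ (CycM n K) :=
  ⟨fun d x => fun m => x m * d.unop m⟩

instance : Module (ZMod n → K) (CycM n K) where
  one_smul x := funext fun m => one_mul (x m)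
  mul_smul d d' x := funext fun m => mul_assoc (d (m + 1)) (d' (m + 1)) (x m)
  smul_zero d := funext fun m => mul_zero (d (m + 1))
  smul_add d x y := funext fun m => mul_add (d (m + 1)) (x m) (y m)
  add_smul d d' x := funext fun m => add_mul (d (m + 1)) (d' (m + 1)) (x m)
  zero_smul x := funext fun m => zero_mul (x m)

instance : Module (ZMod n → K)ᵐᵒᵖ (CycM n K) where
  one_smul x := funext fun m => mul_one (x m)
  mul_smul d d' x := funext fun m => (mul_assoc (x m) (d'.unop m) (d.unop m)).symm
  smul_zero d := funext fun m => zero_mul (d.unop m)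
  smul_add d x y := funext fun m => add_mul (x m) (y m) (d.unop m)
  add_smul d d' x := funext fun m => mul_add (x m) (d.unop m) (d'.unop m)
  zero_smul x := funext fun m => mul_zero (x m)

instance : SMulCommClass (ZMod n → K) (ZMod n → K)ᵐᵒᵖ (CycM n K) :=
  ⟨fun d d' x => funext fun m => (mul_assoc (d (m + 1)) (x m) (d'.unop m)).symm⟩

end Instances

/-- The algebra `A`: the trivial square-zero extension `R ⊕ M`. -/
abbrev CycA (n : ℕ) (K : Type*) [Field K] : Type _ :=
  TrivSqZeroExt (ZMod n → K) (CycM n K)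

/-- The idempotent `e_m = (δ_m, 0)`. -/
noncomputable def eIdem (n : ℕ) (K : Type*) [Field K] (m : ZMod n) : CycA n K :=
  TrivSqZeroExt.inl (Pi.single m 1)

/-- The generator `x_m = (0, δ_m)`. -/
noncomputable def xGen (n : ℕ) (K : Type*) [Field K] (m : ZMod n) : CycA n K :=
  TrivSqZeroExt.inr (M := CycM n K) (Pi.single m 1)

theorem MultilinearMap.map_update_smul_self {R ι M₂ : Type*} {M₁ : ι → Type*} [Semiring R]
    [∀ i, AddCommMonoid (M₁ i)] [AddCommMonoid M₂] [∀ i, Module R (M₁ i)] [Module R M₂]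
    [DecidableEq ι] (f : MultilinearMap R M₁ M₂) (m : ∀ i, M₁ i) (i : ι) (c : R) :
    f (Function.update m i (c • m i)) = c • f m := by
  rw [f.map_update_smul, Function.update_eq_self]

namespace CycA

open TrivSqZeroExt

variable {n : ℕ} {K : Type*} [Field K]

theorem eIdem_mul_self (m : ZMod n) : eIdem n K m * eIdem n K m = eIdem n K m := by
  rw [eIdem, inl_mul_inl, ← Pi.single_mul, mul_one]

theorem eIdem_mul_eIdem_of_ne {l m : ZMod n} (h : l ≠ m) : eIdem n K l * eIdem n K m = 0 := by
  rw [eIdem, eIdem, inl_mul_inl, ← Pi.single_mul_left, Pi.single_eq_of_ne h, mul_zero,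
    Pi.single_zero, inl_zero]

theorem sum_eIdem [NeZero n] : ∑ m : ZMod n, eIdem n K m = 1 := by
  rw [← inl_one (M := CycM n K), ← Finset.univ_sum_single (1 : ZMod n → K), inl_sum]
  rfl

theorem fst_eIdem_self (m : ZMod n) : (eIdem n K m).fst m = 1 := Pi.single_eq_same m 1

theorem fst_xGen (m : ZMod n) : (xGen n K m).fst = 0 := rfl

theorem xGen_mul (m : ZMod n) (a : CycA n K) : xGen n K m * a = a.fst m • xGen n K m := by
  refine ext (by rw [fst_mul, fst_smul, fst_xGen, zero_mul, smul_zero]) (funext fun p => ?_)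
  show (0 : ZMod n → K) (p + 1) * a.snd p + (Pi.single m 1 : ZMod n → K) p * a.fst p =
    a.fst m * (Pi.single m 1 : ZMod n → K) p
  rcases eq_or_ne p m with rfl | h
  · simp
  · simp [h]

theorem mul_xGen (m : ZMod n) (a : CycA n K) : a * xGen n K m = a.fst (m + 1) • xGen n K m := by
  refine ext (by rw [fst_mul, fst_smul, fst_xGen, mul_zero, smul_zero]) (funext fun p => ?_)
  show a.fst (p + 1) * (Pi.single m 1 : ZMod n → K) p + a.snd p * (0 : ZMod n → K) p =
    a.fst (m + 1) * (Pi.single m 1 : ZMod n → K) p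
  rcases eq_or_ne p m with rfl | h
  · simp
  · simp [h]

theorem xGen_mul_xGen (l m : ZMod n) : xGen n K l * xGen n K m = 0 := by
  rw [xGen_mul, fst_xGen, Pi.zero_apply, zero_smul]

theorem eIdem_mul_xGen_mul_eIdem (m : ZMod n) :
    eIdem n K (m + 1) * xGen n K m * eIdem n K m = xGen n K m := by
  rw [mul_assoc, xGen_mul, fst_eIdem_self, one_smul, mul_xGen, fst_eIdem_self, one_smul]

variable {ι : Type*} [DecidableEq ι]

theorem tprod_update_xGen_mul (g : ι → ZMod n) (i : ι) (a : CycA n K) :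
    tprod K (Function.update (fun t => xGen n K (g t)) i (xGen n K (g i) * a)) =
      a.fst (g i) • tprod K (fun t => xGen n K (g t)) := by
  rw [xGen_mul]
  exact (PiTensorProduct.tprod K).map_update_smul_self _ i _

theorem tprod_update_mul_xGen (g : ι → ZMod n) (i : ι) (a : CycA n K) :
    tprod K (Function.update (fun t => xGen n K (g t)) i (a * xGen n K (g i))) =
      a.fst (g i + 1) • tprod K (fun t => xGen n K (g t)) := by
  rw [mul_xGen]
  exact (PiTensorProduct.tprod K).map_update_smul_self _ i _

end CycA

/-- In the algebra `A = R ⊕ M` above, the `e_m` are mutually orthogonal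
idempotents summing to `1`, `e_{m+1}·x_m·e_m = x_m`, `x_l·x_m = 0`, and for each
`k ∈ ℤ/n` the `n`-tuple `(x_{k+1}, …, x_{k+n})` satisfies the cyclic relations (with
`i + 1 = n` and a one-element index family), so that `x_k ⊗ x_{k-1} ⊗ ⋯ ⊗ x_{k-n+1}`
gives rise to an `A`-bimodule map `(A^∨)^{⊗_A (n-1)} → A`. -/
theorem cyclic_quiver_trivial_extension
    (n : ℕ) [NeZero n] (hn : 2 ≤ n) (K : Type*) [Field K] :
    (∀ m : ZMod n, eIdem n K m * eIdem n K m = eIdem n K m) ∧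
    (∀ l m : ZMod n, l ≠ m → eIdem n K l * eIdem n K m = 0) ∧
    (∑ m : ZMod n, eIdem n K m) = 1 ∧
    (∀ m : ZMod n, eIdem n K (m + 1) * xGen n K m * eIdem n K m = xGen n K m) ∧
    (∀ l m : ZMod n, xGen n K l * xGen n K m = 0) ∧
    (∀ k : ZMod n, ∀ a : CycA n K,
      (∀ r : ℕ, ∀ hr : r + 1 < n,
        tprod K (Function.update (fun t : Fin n => xGen n K (k + (t : ℕ) + 1))
            ⟨r + 1, hr⟩ (xGen n K (k + (r + 1 : ℕ) + 1) * a)) =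
        tprod K (Function.update (fun t : Fin n => xGen n K (k + (t : ℕ) + 1))
            ⟨r, Nat.lt_of_succ_lt hr⟩ (a * xGen n K (k + (r : ℕ) + 1)))) ∧
      tprod K (Function.update (fun t : Fin n => xGen n K (k + (t : ℕ) + 1))
          ⟨0, by omega⟩ (xGen n K (k + (0 : ℕ) + 1) * a)) =
      tprod K (Function.update (fun t : Fin n => xGen n K (k + (t : ℕ) + 1))
          ⟨n - 1, by omega⟩ (a * xGen n K (k + (n - 1 : ℕ) + 1)))) := by
  refine ⟨CycA.eIdem_mul_self, fun _ _ => CycA.eIdem_mul_eIdem_of_ne, CycA.sum_eIdem,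
    CycA.eIdem_mul_xGen_mul_eIdem, CycA.xGen_mul_xGen, fun k a => ⟨fun r hr => ?_, ?_⟩⟩
  · rw [CycA.tprod_update_xGen_mul, CycA.tprod_update_mul_xGen]
    refine congrArg (a.fst · • _) ?_
    push_cast
    ring
  · have hn1 : ((n - 1 : ℕ) : ZMod n) + 1 = 0 := by
      rw [Nat.cast_sub (by omega), ZMod.natCast_self]
      ring
    rw [CycA.tprod_update_xGen_mul, CycA.tprod_update_mul_xGen]
    refine congrArg (a.fst · • _) ?_
    linear_combination -hn1
end

section
/- Let M be a smooth (C^∞) manifold without boundary, μ : M → M a diffeomorphism, and g : M → ℝ a smooth function. Then there exists a smooth function G : ℝ × M → ℝ such that g(x) = G(q, x) − G(q − 1, μ(x)) for all q ∈ ℝ and x ∈ M. (This is the trivialization of the cocycle used in the paper's construction of the primitive θ_E = p dq + θ_M + dG of the symplectic form on the symplectic mapping torus of μ.) -/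
/-!
Let `S m x = g x + g (μ x) + ⋯ + g (μ^(m-1) x)` be the Birkhoff sums of `g`, extended to
negative `m` so that `S (m + 1) x = S m x + g (μ^m x)` for all `m : ℤ`; they satisfy the
cocycle identity `S m x - S (m - 1) (μ x) = g x`. Take `G (q, x)` to interpolate between
`S ⌊q⌋ x` and `S (⌊q⌋ + 1) x` along a smooth step that is constant near both ends of `[0, 1]`.
Near any `(q, x)` the function `G` is then given by one smooth formula, and since the
interpolation commutes with `q ↦ q - 1`, the cocycle identity passes from `S` to `G`.
-/

open scoped Topology Manifold

noncomputable section

section BirkhoffSum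

variable {α G : Type*} [AddCommGroup G]

def intBirkhoffSum (σ : Equiv.Perm α) (g : α → G) (m : ℤ) (x : α) : G :=
  ∑ k ∈ Finset.Ico 0 m, g ((σ ^ k) x) - ∑ k ∈ Finset.Ico m 0, g ((σ ^ k) x)

theorem intBirkhoffSum_zero (σ : Equiv.Perm α) (g : α → G) (x : α) :
    intBirkhoffSum σ g 0 x = 0 := by
  simp [intBirkhoffSum]

theorem intBirkhoffSum_add_one (σ : Equiv.Perm α) (g : α → G) (m : ℤ) (x : α) :
    intBirkhoffSum σ g (m + 1) x = intBirkhoffSum σ g m x + g ((σ ^ m) x) := by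
  rcases le_or_gt 0 m with hm | hm
  · simp [intBirkhoffSum, Finset.Ico_eq_empty_of_le hm,
      Finset.Ico_eq_empty_of_le (by omega : 0 ≤ m + 1), ← Finset.sum_Ico_add_eq_sum_Ico_add_one hm]
  · rw [intBirkhoffSum, intBirkhoffSum, ← Finset.insert_Ico_add_one_left_eq_Ico hm,
      Finset.sum_insert (by simp), Finset.Ico_eq_empty_of_le (by omega : m + 1 ≤ 0),
      Finset.Ico_eq_empty_of_le hm.le]
    abel

theorem intBirkhoffSum_sub_intBirkhoffSum_sub_one_apply (σ : Equiv.Perm α) (g : α → G) (m : ℤ)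
    (x : α) : intBirkhoffSum σ g m x - intBirkhoffSum σ g (m - 1) (σ x) = g x := by
  have hstep : ∀ k : ℤ, intBirkhoffSum σ g (k + 1) x - intBirkhoffSum σ g k (σ x) =
      intBirkhoffSum σ g k x - intBirkhoffSum σ g (k - 1) (σ x) := fun k => by
    have hshift : (σ ^ (k - 1)) (σ x) = (σ ^ k) x := by
      rw [← Equiv.Perm.mul_apply, ← zpow_add_one, sub_add_cancel]
    have hprev := intBirkhoffSum_add_one σ g (k - 1) (σ x)
    rw [sub_add_cancel, hshift] at hprev
    rw [intBirkhoffSum_add_one, hprev]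
    abel
  induction m using Int.induction_on with
  | zero =>
    have h := intBirkhoffSum_add_one σ g (0 - 1) (σ x)
    rw [sub_add_cancel, intBirkhoffSum_zero, zero_sub, zpow_neg_one, Equiv.Perm.coe_inv,
      Equiv.symm_apply_apply] at h
    rw [intBirkhoffSum_zero, zero_sub]
    exact neg_eq_of_add_eq_zero_right h.symm
  | succ k ih => rw [add_sub_cancel_right, hstep, ih]
  | pred k ih => rw [← ih, ← hstep, sub_add_cancel]

end BirkhoffSum

section Interpolation

def smoothStep (t : ℝ) : ℝ := Real.smoothTransition (3 * t - 1)

theorem smoothStep_eq_zero_of_le_one_third {t : ℝ} (ht : t ≤ 1 / 3) : smoothStep t = 0 :=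
  Real.smoothTransition.zero_of_nonpos (by linarith)

theorem smoothStep_eq_one_of_two_thirds_le {t : ℝ} (ht : 2 / 3 ≤ t) : smoothStep t = 1 :=
  Real.smoothTransition.one_of_one_le (by linarith)

theorem contDiff_smoothStep {n : ℕ∞} : ContDiff ℝ n smoothStep :=
  Real.smoothTransition.contDiff.comp ((contDiff_const.mul contDiff_id).sub contDiff_const)

variable {V : Type*} [AddCommGroup V] [Module ℝ V]

def smoothInterpolate (F : ℤ → V) (t : ℝ) : V :=
  F ⌊t⌋ + smoothStep (Int.fract t) • (F (⌊t⌋ + 1) - F ⌊t⌋)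

theorem smoothInterpolate_eq_of_mem_Ioo (F : ℤ → V) {m : ℤ} {t : ℝ}
    (ht : t ∈ Set.Ioo ((m : ℝ) - 1 / 3) (m + 1)) :
    smoothInterpolate F t = F m + smoothStep (t - m) • (F (m + 1) - F m) := by
  obtain ⟨hlo, hhi⟩ := ht
  rcases le_or_gt (m : ℝ) t with hm | hm
  · have hfloor : ⌊t⌋ = m := Int.floor_eq_iff.2 ⟨hm, hhi⟩
    rw [smoothInterpolate, Int.fract, hfloor]
  · have hfloor : ⌊t⌋ = m - 1 :=
      Int.floor_eq_iff.2 ⟨by push_cast; linarith, by push_cast; linarith⟩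
    rw [smoothInterpolate, Int.fract, hfloor, sub_add_cancel,
      smoothStep_eq_one_of_two_thirds_le (t := t - (m - 1 : ℤ)) (by push_cast; linarith),
      smoothStep_eq_zero_of_le_one_third (t := t - m) (by linarith)]
    simp

theorem smoothInterpolate_sub_one (F : ℤ → V) (t : ℝ) :
    smoothInterpolate F (t - 1) = smoothInterpolate (fun m => F (m - 1)) t := by
  simp only [smoothInterpolate, Int.floor_sub_one, Int.fract_sub_one, sub_add_cancel,
    add_sub_cancel_right]

theorem smoothInterpolate_sub (F F' : ℤ → V) (t : ℝ) :
    smoothInterpolate F t - smoothInterpolate F' t = smoothInterpolate (F - F') t := by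
  simp only [smoothInterpolate, Pi.sub_apply, smul_sub]
  abel

theorem smoothInterpolate_const (v : V) (t : ℝ) : smoothInterpolate (fun _ => v) t = v := by
  simp [smoothInterpolate]

end Interpolation

section Smoothness

variable {E H M V : Type*} [NormedAddCommGroup E] [NormedSpace ℝ E] [TopologicalSpace H]
  {I : ModelWithCorners ℝ E H} [TopologicalSpace M] [ChartedSpace H M]
  [NormedAddCommGroup V] [NormedSpace ℝ V] {n : ℕ∞}

theorem contMDiff_smoothInterpolate {F : ℤ → M → V} (hF : ∀ m, ContMDiff I 𝓘(ℝ, V) n (F m)) :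
    ContMDiff (𝓘(ℝ).prod I) 𝓘(ℝ, V) n fun p : ℝ × M => smoothInterpolate (F · p.2) p.1 := by
  rintro ⟨t, x⟩
  set m := ⌊t⌋
  have hstrip : Set.Ioo ((m : ℝ) - 1 / 3) (m + 1) ×ˢ Set.univ ∈ 𝓝 (t, x) :=
    prod_mem_nhds (Ioo_mem_nhds (by linarith [Int.floor_le t]) (Int.lt_floor_add_one t))
      Filter.univ_mem
  have hlocal : (fun p : ℝ × M => smoothInterpolate (F · p.2) p.1) =ᶠ[𝓝 (t, x)]
      fun p => F m p.2 + smoothStep (p.1 - m) • (F (m + 1) p.2 - F m p.2) := by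
    filter_upwards [hstrip] with p hp using smoothInterpolate_eq_of_mem_Ioo _ hp.1
  have hstep : ContMDiff (𝓘(ℝ).prod I) 𝓘(ℝ) n fun p : ℝ × M => smoothStep (p.1 - m) :=
    (contDiff_smoothStep.comp (contDiff_id.sub contDiff_const)).comp_contMDiff contMDiff_fst
  have hF' : ∀ k, ContMDiff (𝓘(ℝ).prod I) 𝓘(ℝ, V) n fun p : ℝ × M => F k p.2 :=
    fun k => (hF k).comp contMDiff_snd
  exact ((hF' m).add (hstep.smul ((hF' (m + 1)).sub (hF' m)))).contMDiffAt.congr_of_eventuallyEq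
    hlocal

theorem Diffeomorph.contMDiff_zpow_toEquiv (Φ : M ≃ₘ^n⟮I, I⟯ M) (m : ℤ) :
    ContMDiff I I n ⇑(Φ.toEquiv ^ m) := by
  induction m using Int.induction_on with
  | zero => exact contMDiff_id
  | succ k ih => rw [zpow_add_one, Equiv.Perm.coe_mul]; exact ih.comp Φ.contMDiff
  | pred k ih => rw [zpow_sub_one, Equiv.Perm.coe_mul]; exact ih.comp Φ.symm.contMDiff

theorem contMDiff_intBirkhoffSum (Φ : M ≃ₘ^n⟮I, I⟯ M) {g : M → V}
    (hg : ContMDiff I 𝓘(ℝ, V) n g) (m : ℤ) :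
    ContMDiff I 𝓘(ℝ, V) n (intBirkhoffSum Φ.toEquiv g m) :=
  (ContMDiff.sum fun k _ => hg.comp (Φ.contMDiff_zpow_toEquiv k)).sub
    (ContMDiff.sum fun k _ => hg.comp (Φ.contMDiff_zpow_toEquiv k))

end Smoothness

end

theorem exists_smooth_cocycle_trivialization_general
    {E : Type*} [NormedAddCommGroup E] [NormedSpace ℝ E]
    {M : Type*} [TopologicalSpace M] [ChartedSpace E M]
    (μ : Diffeomorph (modelWithCornersSelf ℝ E) (modelWithCornersSelf ℝ E) M M (⊤ : ℕ∞))
    (g : M → ℝ)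
    (hg : ContMDiff (modelWithCornersSelf ℝ E) (modelWithCornersSelf ℝ ℝ) (⊤ : ℕ∞) g) :
    ∃ G : ℝ × M → ℝ,
      ContMDiff ((modelWithCornersSelf ℝ ℝ).prod (modelWithCornersSelf ℝ E))
        (modelWithCornersSelf ℝ ℝ) (⊤ : ℕ∞) G ∧
      ∀ (q : ℝ) (x : M), g x = G (q, x) - G (q - 1, μ x) := by
  refine ⟨fun p => smoothInterpolate (intBirkhoffSum μ.toEquiv g · p.2) p.1,
    contMDiff_smoothInterpolate (contMDiff_intBirkhoffSum μ hg), fun q x => ?_⟩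
  have hcocycle : (fun m => intBirkhoffSum μ.toEquiv g m x) -
      (fun m => intBirkhoffSum μ.toEquiv g (m - 1) (μ x)) = fun _ => g x :=
    funext fun m => intBirkhoffSum_sub_intBirkhoffSum_sub_one_apply μ.toEquiv g m x
  dsimp only
  rw [smoothInterpolate_sub_one, smoothInterpolate_sub, hcocycle, smoothInterpolate_const]

/-- For a smooth boundaryless manifold `M` (modeled on a
finite-dimensional real vector space `E`), a diffeomorphism `μ : M → M`, and a smooth
function `g : M → ℝ`, there is a smooth function `G : ℝ × M → ℝ` with
`g x = G (q, x) − G (q − 1, μ x)` for all `q ∈ ℝ`, `x ∈ M`. -/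
theorem exists_smooth_cocycle_trivialization
    {E : Type*} [NormedAddCommGroup E] [NormedSpace ℝ E] [FiniteDimensional ℝ E]
    {M : Type*} [TopologicalSpace M] [ChartedSpace E M]
    [IsManifold (modelWithCornersSelf ℝ E) (⊤ : ℕ∞) M]
    (μ : Diffeomorph (modelWithCornersSelf ℝ E) (modelWithCornersSelf ℝ E) M M (⊤ : ℕ∞))
    (g : M → ℝ)
    (hg : ContMDiff (modelWithCornersSelf ℝ E) (modelWithCornersSelf ℝ ℝ) (⊤ : ℕ∞) g) :
    ∃ G : ℝ × M → ℝ,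
      ContMDiff ((modelWithCornersSelf ℝ ℝ).prod (modelWithCornersSelf ℝ E))
        (modelWithCornersSelf ℝ ℝ) (⊤ : ℕ∞) G ∧
      ∀ (q : ℝ) (x : M), g x = G (q, x) - G (q - 1, μ x) :=
  exists_smooth_cocycle_trivialization_general μ g hg
end
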